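/- arXiv:1805.08602 — 2 statements merged into one kernel-verified Lean document; each statement's English description precedes it below -/
import Mathlib

section
/- Let f : ℕ → ℝ be a function satisfying f(U) ≤ f(⌈Real.sqrt U⌉) + c · Real.logb 2 U for all U ≥ 4, and f(U) ≤ c for all U < 4, where c ≥ 0. Then f(U) ≤ 3 · c · Real.logb 2 U for all U ≥ 4. -/
/-!
Write `m = ⌈√U⌉`. When `m ≥ 4` we have `√U ≥ 3`, hence `m < √U + 1` and `(√U + 1)³ ≤ √U⁴`, so
`log m ≤ (2/3) log U`: the bound `3 c log m` for `f m` costs at most `2 c log U`, and the recurrence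
adds `c log U`. When `m < 4` the base value `c` is at most `(c/2) log U` because `log U ≥ 2`.
-/

open Real

lemma add_one_pow_three_le_pow_four {s : ℝ} (hs : 3 ≤ s) : (s + 1) ^ 3 ≤ s ^ 4 := by
  nlinarith [mul_nonneg (sub_nonneg.mpr hs) (pow_nonneg (by linarith : (0 : ℝ) ≤ s) 3),
    mul_nonneg (sub_nonneg.mpr hs) (pow_nonneg (by linarith : (0 : ℝ) ≤ s) 2),
    mul_nonneg (sub_nonneg.mpr hs) (by linarith : (0 : ℝ) ≤ s)]

lemma ceil_sqrt_pow_three_le_sq {x : ℝ} (hx : 9 ≤ x) : (⌈√x⌉₊ : ℝ) ^ 3 ≤ x ^ 2 := by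
  have hs : 3 ≤ √x := (le_sqrt (by norm_num) (by linarith)).mpr (by linarith)
  calc (⌈√x⌉₊ : ℝ) ^ 3 ≤ (√x + 1) ^ 3 := by
        gcongr; exact (Nat.ceil_lt_add_one (sqrt_nonneg x)).le
    _ ≤ √x ^ 4 := add_one_pow_three_le_pow_four hs
    _ = x ^ 2 := by rw [show 4 = 2 * 2 by rfl, pow_mul, sq_sqrt (by linarith)]

lemma logb_ceil_sqrt_le {b x : ℝ} (hb : 1 < b) (hx : 9 ≤ x) :
    logb b ⌈√x⌉₊ ≤ 2 / 3 * logb b x := by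
  have hpos : (0 : ℝ) < ⌈√x⌉₊ := by
    exact_mod_cast Nat.ceil_pos.mpr (sqrt_pos.mpr (by linarith))
  have h := logb_le_logb_of_le hb (pow_pos hpos 3) (ceil_sqrt_pow_three_le_sq hx)
  rw [logb_pow, logb_pow] at h
  push_cast at h
  linarith

lemma ceil_sqrt_lt_self {x : ℝ} (hx : 4 ≤ x) : (⌈√x⌉₊ : ℝ) < x := by
  have hs : 2 ≤ √x := (le_sqrt (by norm_num) (by linarith)).mpr (by linarith)
  calc (⌈√x⌉₊ : ℝ) < √x + 1 := Nat.ceil_lt_add_one (sqrt_nonneg x)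
    _ ≤ √x ^ 2 := by nlinarith
    _ = x := sq_sqrt (by linarith)

lemma two_le_logb_two {x : ℝ} (hx : 4 ≤ x) : 2 ≤ logb 2 x :=
  (le_logb_iff_rpow_le (by norm_num) (by linarith)).mpr (by norm_num [hx])

theorem stmt_0 (f : ℕ → ℝ) (c : ℝ) (hc : 0 ≤ c)
    (hrec : ∀ U : ℕ, 4 ≤ U → f U ≤ f ⌈Real.sqrt U⌉₊ + c * Real.logb 2 U)
    (hbase : ∀ U : ℕ, U < 4 → f U ≤ c) :
    ∀ U : ℕ, 4 ≤ U → f U ≤ 3 * c * Real.logb 2 U := by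
  intro U
  induction U using Nat.strong_induction_on with
  | _ U ih =>
    intro hU
    have hU' : (4 : ℝ) ≤ U := by exact_mod_cast hU
    have hlog := two_le_logb_two hU'
    have hm : f ⌈√(U : ℝ)⌉₊ ≤ 2 * c * logb 2 U := by
      by_cases hsmall : ⌈√(U : ℝ)⌉₊ < 4
      · nlinarith [hbase _ hsmall]
      · have hlt : ⌈√(U : ℝ)⌉₊ < U := by exact_mod_cast ceil_sqrt_lt_self hU'
        have h3 : ((3 : ℕ) : ℝ) < √U := Nat.lt_ceil.mp (by omega)
        have h9 : (9 : ℝ) ≤ U := by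
          have := (lt_sqrt (by norm_num)).mp h3
          norm_num at this; exact_mod_cast this.le
        calc f ⌈√(U : ℝ)⌉₊ ≤ 3 * c * logb 2 ⌈√(U : ℝ)⌉₊ := ih _ hlt (by omega)
          _ ≤ 3 * c * (2 / 3 * logb 2 U) := by
            gcongr; exact logb_ceil_sqrt_le (by norm_num) h9
          _ = 2 * c * logb 2 U := by ring
    linarith [hrec U hU]
end

section
/- Let a ≤ b be reals and let the slab Σ = {p ∈ ℝ³ : a ≤ p.x ≤ b}. Let B₁, B₂ be axis-aligned boxes in ℝ³ with B₁ ∩ B₂ = ∅, such that B₁ ⊆ Σ (B₁ is a 'short' box of the slab) and the x-projection of B₂ contains the interval [a, b] (B₂ is a 'middle' box spanning the slab). Let q = (q_x, q_y, q_z) with a ≤ q_x ≤ b. If (q_y, q_z) lies in the yz-projection of B₁, then q ∉ B₂. -/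
open Set in
theorem stmt_4 (a b : ℝ) (hab : a ≤ b)
    (x₁ x₂ y₁ y₂ z₁ z₂ x₁' x₂' y₁' y₂' z₁' z₂' : ℝ)
    (hx : x₁ ≤ x₂)
    (hdisj : (Icc x₁ x₂ ×ˢ Icc y₁ y₂ ×ˢ Icc z₁ z₂ : Set (ℝ × ℝ × ℝ)) ∩
      (Icc x₁' x₂' ×ˢ Icc y₁' y₂' ×ˢ Icc z₁' z₂') = ∅)
    (hslab : (Icc x₁ x₂ ×ˢ Icc y₁ y₂ ×ˢ Icc z₁ z₂ : Set (ℝ × ℝ × ℝ)) ⊆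
      {p : ℝ × ℝ × ℝ | a ≤ p.1 ∧ p.1 ≤ b})
    (hmid : Icc a b ⊆ Icc x₁' x₂')
    (qx qy qz : ℝ) (hq : a ≤ qx ∧ qx ≤ b)
    (hyz : (qy, qz) ∈ (Icc y₁ y₂ ×ˢ Icc z₁ z₂ : Set (ℝ × ℝ))) :
    (qx, qy, qz) ∉ (Icc x₁' x₂' ×ˢ Icc y₁' y₂' ×ˢ Icc z₁' z₂' : Set (ℝ × ℝ × ℝ)) := by
  intro hqB
  have hp1 : (x₁, qy, qz) ∈ (Icc x₁ x₂ ×ˢ Icc y₁ y₂ ×ˢ Icc z₁ z₂ : Set (ℝ × ℝ × ℝ)) :=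
    ⟨⟨le_refl _, hx⟩, hyz⟩
  have hx1ab := hslab hp1
  have hx1' := hmid ⟨hx1ab.1, hx1ab.2⟩
  have hp2 : (x₁, qy, qz) ∈ (Icc x₁' x₂' ×ˢ Icc y₁' y₂' ×ˢ Icc z₁' z₂' : Set (ℝ × ℝ × ℝ)) :=
    ⟨hx1', hqB.2⟩
  exact absurd hdisj (Set.nonempty_iff_ne_empty.mp ⟨_, hp1, hp2⟩)
end
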